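/- Let m be a positive natural number, let M and K be m×m real antisymmetric matrices, let S : ℝ^m → ℝ be twice continuously differentiable, and let z : ℝ × ℝ → ℝ^m be continuous. Suppose w, w̌ : ℝ × ℝ → ℝ^m are continuously differentiable and each satisfies the variational (linearized) equation M ∂_t w + K ∂_x w = ∇²S(z(x,t)) w at every point, where ∇²S denotes the Hessian matrix of S. Then ∂_t((M w)·w̌) + ∂_x((K w)·w̌) = 0 at every point (x,t). -/

import Mathlib

open Matrix

/-- Partial derivative in the first (spatial) variable of a function on `ℝ × ℝ`. -/
noncomputable def pdX {E : Type*} [NormedAddCommGroup E] [NormedSpace ℝ E]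
    (z : ℝ × ℝ → E) (p : ℝ × ℝ) : E :=
  fderiv ℝ z p (1, 0)

/-- Partial derivative in the second (temporal) variable of a function on `ℝ × ℝ`. -/
noncomputable def pdT {E : Type*} [NormedAddCommGroup E] [NormedSpace ℝ E]
    (z : ℝ × ℝ → E) (p : ℝ × ℝ) : E :=
  fderiv ℝ z p (0, 1)

/-- The Hessian matrix of `S : ℝ^m → ℝ`, as the matrix of second partial derivatives. -/
noncomputable def hessS {m : ℕ} (S : (Fin m → ℝ) → ℝ) (v : Fin m → ℝ) :
    Matrix (Fin m) (Fin m) ℝ :=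
  fun i j => fderiv ℝ (fun u => fderiv ℝ S u (Pi.single j 1)) v (Pi.single i 1)

/-!
Differentiating both densities by the product rule and moving `M` and `K` across the dot product
by antisymmetry turns `∂ₜ((M w)·w̌) + ∂ₓ((K w)·w̌)` into `(M wₜ + K wₓ)·w̌ - w·(M w̌ₜ + K w̌ₓ)`.
By the linearized equation this is `(H w)·w̌ - w·(H w̌)` with `H = ∇²S(z)`, which vanishes because
the Hessian of a `C²` function is symmetric.
-/

section Algebra

variable {n R : Type*} [Fintype n] [CommRing R]

lemma mulVec_dotProduct_eq_dotProduct_transpose_mulVec (A : Matrix n n R) (u v : n → R) :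
    A *ᵥ u ⬝ᵥ v = u ⬝ᵥ Aᵀ *ᵥ v := by
  rw [dotProduct_mulVec, vecMul_transpose]

lemma mulVec_dotProduct_of_transpose_eq_neg {A : Matrix n n R} (hA : Aᵀ = -A) (u v : n → R) :
    A *ᵥ u ⬝ᵥ v = -(u ⬝ᵥ A *ᵥ v) := by
  rw [mulVec_dotProduct_eq_dotProduct_transpose_mulVec, hA, neg_mulVec, dotProduct_neg]

lemma mulVec_dotProduct_of_transpose_eq {A : Matrix n n R} (hA : Aᵀ = A) (u v : n → R) :
    A *ᵥ u ⬝ᵥ v = u ⬝ᵥ A *ᵥ v := by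
  rw [mulVec_dotProduct_eq_dotProduct_transpose_mulVec, hA]

lemma multisymplectic_flux_eq {M K : Matrix n n R} (hM : Mᵀ = -M) (hK : Kᵀ = -K)
    (w wₜ wₓ v vₜ vₓ : n → R) :
    (M *ᵥ wₜ ⬝ᵥ v + M *ᵥ w ⬝ᵥ vₜ) + (K *ᵥ wₓ ⬝ᵥ v + K *ᵥ w ⬝ᵥ vₓ)
      = (M *ᵥ wₜ + K *ᵥ wₓ) ⬝ᵥ v - w ⬝ᵥ (M *ᵥ vₜ + K *ᵥ vₓ) := by
  rw [mulVec_dotProduct_of_transpose_eq_neg hM w, mulVec_dotProduct_of_transpose_eq_neg hK w,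
    add_dotProduct, dotProduct_add]
  ring

end Algebra

section Calculus

variable {𝕜 ι : Type*} [NontriviallyNormedField 𝕜] [Fintype ι]

theorem HasDerivAt.dotProduct {f g : 𝕜 → ι → 𝕜} {f' g' : ι → 𝕜} {t : 𝕜}
    (hf : HasDerivAt f f' t) (hg : HasDerivAt g g' t) :
    HasDerivAt (fun s => f s ⬝ᵥ g s) (f' ⬝ᵥ g t + f t ⬝ᵥ g') t := by
  simp only [_root_.dotProduct, ← Finset.sum_add_distrib]
  exact HasDerivAt.fun_sum fun i _ => (hasDerivAt_pi.1 hf i).mul (hasDerivAt_pi.1 hg i)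

theorem HasDerivAt.mulVec {κ : Type*} (A : Matrix κ ι 𝕜) {f : 𝕜 → ι → 𝕜} {f' : ι → 𝕜} {t : 𝕜}
    (hf : HasDerivAt f f' t) : HasDerivAt (fun s => A *ᵥ f s) (A *ᵥ f') t :=
  hasDerivAt_pi.2 fun i => by
    have h := (hasDerivAt_const t (A i)).dotProduct hf
    rwa [zero_dotProduct, zero_add] at h

end Calculus

section PartialDerivatives

variable {E : Type*} [NormedAddCommGroup E] [NormedSpace ℝ E] {w : ℝ × ℝ → E} {x t : ℝ}

lemma DifferentiableAt.hasDerivAt_pdT (hw : DifferentiableAt ℝ w (x, t)) :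
    HasDerivAt (fun s => w (x, s)) (pdT w (x, t)) t :=
  hw.hasFDerivAt.comp_hasDerivAt t ((hasDerivAt_const t x).prodMk (hasDerivAt_id t))

lemma DifferentiableAt.hasDerivAt_pdX (hw : DifferentiableAt ℝ w (x, t)) :
    HasDerivAt (fun y => w (y, t)) (pdX w (x, t)) x :=
  hw.hasFDerivAt.comp_hasDerivAt x ((hasDerivAt_id x).prodMk (hasDerivAt_const x t))

end PartialDerivatives

lemma hessS_apply {m : ℕ} {S : (Fin m → ℝ) → ℝ} {v : Fin m → ℝ}
    (hS : DifferentiableAt ℝ (fderiv ℝ S) v) (i j : Fin m) :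
    hessS S v i j = fderiv ℝ (fderiv ℝ S) v (Pi.single i 1) (Pi.single j 1) := by
  simp [hessS, fderiv_clm_apply hS (differentiableAt_const _)]

lemma hessS_transpose {m : ℕ} {S : (Fin m → ℝ) → ℝ} {v : Fin m → ℝ} (hS : ContDiffAt ℝ 2 S v) :
    (hessS S v)ᵀ = hessS S v := by
  have hS' : DifferentiableAt ℝ (fderiv ℝ S) v :=
    (hS.fderiv_right le_rfl).differentiableAt one_ne_zero
  ext i j
  rw [transpose_apply, hessS_apply hS', hessS_apply hS', hS.isSymmSndFDerivAt (by simp)]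

theorem stmt2_general {m : ℕ}
    (M K : Matrix (Fin m) (Fin m) ℝ)
    (hM : Mᵀ = -M) (hK : Kᵀ = -K)
    (S : (Fin m → ℝ) → ℝ) (hS : ContDiff ℝ 2 S)
    (z : ℝ × ℝ → Fin m → ℝ)
    (w wv : ℝ × ℝ → Fin m → ℝ)
    (hw : ContDiff ℝ 1 w) (hwv : ContDiff ℝ 1 wv)
    (hweq : ∀ p : ℝ × ℝ,
      M.mulVec (pdT w p) + K.mulVec (pdX w p) = (hessS S (z p)).mulVec (w p))
    (hwveq : ∀ p : ℝ × ℝ,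
      M.mulVec (pdT wv p) + K.mulVec (pdX wv p) = (hessS S (z p)).mulVec (wv p)) :
    ∀ x t : ℝ,
      deriv (fun s => M.mulVec (w (x, s)) ⬝ᵥ wv (x, s)) t
        + deriv (fun y => K.mulVec (w (y, t)) ⬝ᵥ wv (y, t)) x = 0 := by
  intro x t
  have hwT := (hw.differentiable one_ne_zero (x, t)).hasDerivAt_pdT
  have hwX := (hw.differentiable one_ne_zero (x, t)).hasDerivAt_pdX
  have hwvT := (hwv.differentiable one_ne_zero (x, t)).hasDerivAt_pdT
  have hwvX := (hwv.differentiable one_ne_zero (x, t)).hasDerivAt_pdX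
  rw [((hwT.mulVec M).dotProduct hwvT).deriv, ((hwX.mulVec K).dotProduct hwvX).deriv,
    multisymplectic_flux_eq hM hK, hweq, hwveq,
    mulVec_dotProduct_of_transpose_eq (hessS_transpose hS.contDiffAt), sub_self]

/-- Multi-symplectic conservation law `∂ₜ((Mw)·w̌) + ∂ₓ((Kw)·w̌) = 0` for two solutions
`w`, `w̌` of the variational (linearized) equation `M wₜ + K wₓ = ∇²S(z) w`. -/
theorem stmt2 {m : ℕ} (hm : 0 < m)
    (M K : Matrix (Fin m) (Fin m) ℝ)
    (hM : Mᵀ = -M) (hK : Kᵀ = -K)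
    (S : (Fin m → ℝ) → ℝ) (hS : ContDiff ℝ 2 S)
    (z : ℝ × ℝ → Fin m → ℝ) (hz : Continuous z)
    (w wv : ℝ × ℝ → Fin m → ℝ)
    (hw : ContDiff ℝ 1 w) (hwv : ContDiff ℝ 1 wv)
    (hweq : ∀ p : ℝ × ℝ,
      M.mulVec (pdT w p) + K.mulVec (pdX w p) = (hessS S (z p)).mulVec (w p))
    (hwveq : ∀ p : ℝ × ℝ,
      M.mulVec (pdT wv p) + K.mulVec (pdX wv p) = (hessS S (z p)).mulVec (wv p)) :
    ∀ x t : ℝ,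
      deriv (fun s => M.mulVec (w (x, s)) ⬝ᵥ wv (x, s)) t
        + deriv (fun y => K.mulVec (w (y, t)) ⬝ᵥ wv (y, t)) x = 0 :=
  stmt2_general M K hM hK S hS z w wv hw hwv hweq hwveq
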